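/- arXiv:1510.07379 — 5 statements merged into one kernel-verified Lean document; each statement's English description precedes it below -/
import Mathlib

section
/- Let A ∈ ℂ^{n×N} satisfy A A^* = I_n, let x0 ∈ ℂ^n, b = |A^* x0|, and let X ⊆ ℂ^n be a nonempty closed convex set containing 0, with nearest-point projection P_X. Define x^{(k+1)} = P_X(A(b ⊙ phase(A^* x^{(k)}))) from any starting point x^{(1)} ∈ X. Then: (i) ‖x^{(k)}‖ ≤ ‖b‖ for all k ≥ 2, so the sequence is bounded; (ii) ‖x^{(k+1)} − x^{(k)}‖ → 0 as k → ∞; and (iii) every accumulation point x_* of the sequence is a fixed point of AP, i.e. there exists u ∈ ℂ^N with |u_j| = 1 for all j and u_j = 1 whenever (A^* x_*)_j ≠ 0, such that x_* = P_X(A(b ⊙ u ⊙ phase(A^* x_*))). -/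
/-!
AP is a majorize–minimize scheme for the amplitude misfit `f x = ∑ⱼ (|⟪aⱼ, x⟫| - bⱼ)²`.
Freezing the phases `w = phase (A^* x)` at the current iterate gives the majorant
`z ↦ ∑ⱼ |⟪aⱼ, z⟫ - bⱼ wⱼ|²` of `f`, tight at `x` because `phase` is the best unimodular
approximation. By Parseval this majorant is `‖z - A (b ⊙ w)‖²` plus a constant, so the three-point
inequality of the projection gives `f x⁺ + ‖x⁺ - x‖² ≤ f x` for `x⁺ = P_X (A (b ⊙ w))`: the steps
are square-summable. The same identity at `z = A c` shows `‖A c‖ ≤ ‖c‖`, whence `‖x⁺‖ ≤ ‖b‖`.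
Along a subsequence converging to `x_*`, the phase vectors converge after passing to a further
subsequence; where `A^* x_*` does not vanish the limit is `phase (A^* x_*)` by continuity, elsewhere
it is some unimodular `u`, and continuity of `P_X` carries the iteration to the limit.
-/

/-- `phase z = z/|z|`, with the convention `phase 0 = 1`. -/
noncomputable def phase (z : ℂ) : ℂ := if z = 0 then 1 else z / (‖z‖ : ℂ)

open Filter Topology Finset
open scoped InnerProductSpace

@[simp]
lemma phase_zero : phase 0 = 1 := if_pos rfl

lemma norm_phase (z : ℂ) : ‖phase z‖ = 1 := by
  by_cases hz : z = 0
  · simp [hz]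
  · simp [phase, hz]

lemma norm_sub_ofReal_mul_phase (z : ℂ) (t : ℝ) : ‖z - t * phase z‖ = |‖z‖ - t| := by
  by_cases hz : z = 0
  · simp [hz]
  · have hz' : (‖z‖ : ℂ) ≠ 0 := by exact_mod_cast norm_ne_zero_iff.mpr hz
    have : z - t * phase z = phase z * ((‖z‖ - t : ℝ) : ℂ) := by
      simp only [phase, if_neg hz]
      push_cast
      field_simp
    rw [this, norm_mul, norm_phase, one_mul, Complex.norm_real, Real.norm_eq_abs]

lemma norm_sub_ofReal_mul_phase_le (z : ℂ) {u : ℂ} {t : ℝ} (ht : 0 ≤ t) (hu : ‖u‖ = 1) :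
    ‖z - t * phase z‖ ≤ ‖z - t * u‖ := by
  have htu : ‖(t : ℂ) * u‖ = t := by
    rw [norm_mul, Complex.norm_real, hu, Real.norm_of_nonneg ht, mul_one]
  calc ‖z - t * phase z‖ = |‖z‖ - ‖(t : ℂ) * u‖| := by rw [norm_sub_ofReal_mul_phase, htu]
    _ ≤ ‖z - t * u‖ := abs_norm_sub_norm_le _ _

lemma continuousAt_phase {z : ℂ} (hz : z ≠ 0) : ContinuousAt phase z := by
  have heq : (fun w : ℂ => w / (‖w‖ : ℂ)) =ᶠ[𝓝 z] phase := by
    filter_upwards [isOpen_ne.mem_nhds hz] with w hw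
    simp [phase, hw]
  refine ContinuousAt.congr ?_ heq
  exact continuousAt_id.div (by fun_prop) (by exact_mod_cast norm_ne_zero_iff.mpr hz)

/-- At `z₀ = 0` a limit of phases can be any unimodular number: this is where the factor `u` in
the fixed-point equation comes from. -/
lemma exists_unimodular_of_tendsto_phase {α : Type*} {l : Filter α} [l.NeBot] {z : α → ℂ}
    {z₀ v : ℂ} (hz : Tendsto z l (𝓝 z₀)) (hv : Tendsto (fun k => phase (z k)) l (𝓝 v)) :
    ∃ u : ℂ, ‖u‖ = 1 ∧ (z₀ ≠ 0 → u = 1) ∧ v = u * phase z₀ := by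
  by_cases hz₀ : z₀ = 0
  · refine ⟨v, ?_, fun h => absurd hz₀ h, by simp [hz₀]⟩
    have hnorm := hv.norm
    simp only [norm_phase] at hnorm
    exact tendsto_nhds_unique hnorm tendsto_const_nhds
  · refine ⟨1, norm_one, fun _ => rfl, ?_⟩
    rw [one_mul]
    exact tendsto_nhds_unique hv ((continuousAt_phase hz₀).tendsto.comp hz)

lemma tendsto_zero_of_sq_add_le {d e : ℕ → ℝ} (hd : ∀ k, 0 ≤ d k)
    (h : ∀ k, d (k + 1) + e k ^ 2 ≤ d k) : Tendsto e atTop (𝓝 0) := by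
  have hpartial : ∀ n, ∑ k ∈ range n, e k ^ 2 ≤ d 0 - d n := by
    intro n
    induction n with
    | zero => simp
    | succ n ih => rw [sum_range_succ]; linarith [h n]
  have hsq : Tendsto (fun k => e k ^ 2) atTop (𝓝 0) :=
    (summable_of_sum_range_le (fun _ => sq_nonneg _)
      fun n => (hpartial n).trans (by linarith [hd n])).tendsto_atTop_zero
  rw [tendsto_zero_iff_abs_tendsto_zero]
  simpa only [Function.comp_def, Real.sqrt_sq_eq_abs, Real.sqrt_zero] using
    (Real.continuous_sqrt.tendsto 0).comp hsq

section NearestPoint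

variable {F : Type*} [NormedAddCommGroup F]

def IsNearestPointMap (X : Set F) (P : F → F) : Prop :=
  ∀ y, P y ∈ X ∧ ∀ z ∈ X, ‖y - P y‖ ≤ ‖y - z‖

variable [InnerProductSpace ℝ F]

namespace IsNearestPointMap

variable {X : Set F} {P : F → F}

lemma inner_sub_le_zero (hP : IsNearestPointMap X P) (hX : Convex ℝ X) (y : F) {z : F}
    (hz : z ∈ X) : ⟪y - P y, z - P y⟫_ℝ ≤ 0 := by
  have : Nonempty X := ⟨⟨P y, (hP y).1⟩⟩
  refine (norm_eq_iInf_iff_real_inner_le_zero hX (hP y).1).mp ?_ z hz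
  have hbdd : BddBelow (Set.range fun w : X => ‖y - w‖) :=
    ⟨0, by rintro _ ⟨w, rfl⟩; exact norm_nonneg _⟩
  exact le_antisymm (le_ciInf fun w => (hP y).2 w w.2) (ciInf_le hbdd ⟨P y, (hP y).1⟩)

lemma sq_norm_sub_add_sq_norm_sub_le (hP : IsNearestPointMap X P) (hX : Convex ℝ X) (y : F)
    {z : F} (hz : z ∈ X) : ‖P y - y‖ ^ 2 + ‖z - P y‖ ^ 2 ≤ ‖z - y‖ ^ 2 := by
  have h := hP.inner_sub_le_zero hX y hz
  have hinner : ⟪z - P y, P y - y⟫_ℝ = -⟪y - P y, z - P y⟫_ℝ := by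
    rw [real_inner_comm, ← neg_sub y (P y), inner_neg_left]
  rw [← sub_add_sub_cancel z (P y) y, norm_add_sq_real, hinner]
  linarith

lemma norm_le (hP : IsNearestPointMap X P) (hX : Convex ℝ X) (h0 : 0 ∈ X) (y : F) :
    ‖P y‖ ≤ ‖y‖ := by
  have h := hP.sq_norm_sub_add_sq_norm_sub_le hX y h0
  rw [zero_sub, norm_neg, zero_sub, norm_neg] at h
  exact (sq_le_sq₀ (norm_nonneg _) (norm_nonneg _)).mp (by nlinarith [sq_nonneg ‖P y - y‖])

lemma lipschitzWith_one (hP : IsNearestPointMap X P) (hX : Convex ℝ X) : LipschitzWith 1 P := by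
  refine LipschitzWith.of_dist_le_mul fun y y' => ?_
  rw [NNReal.coe_one, one_mul, dist_eq_norm, dist_eq_norm]
  have h := hP.inner_sub_le_zero hX y (hP y').1
  have h' := hP.inner_sub_le_zero hX y' (hP y).1
  -- Adding the two variational inequalities gives firm nonexpansiveness.
  have hfirm : ‖P y - P y'‖ ^ 2 ≤ ⟪y - y', P y - P y'⟫_ℝ := by
    rw [← real_inner_self_eq_norm_sq]
    simp only [inner_sub_left, inner_sub_right, real_inner_comm (P y)] at h h' ⊢
    linarith
  have hcs := hfirm.trans (real_inner_le_norm (y - y') (P y - P y'))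
  nlinarith [norm_nonneg (P y - P y'), norm_nonneg (y - y')]

end IsNearestPointMap

end NearestPoint

section ParsevalFrame

variable {𝕜 ι E : Type*} [RCLike 𝕜] [Fintype ι] [NormedAddCommGroup E] [InnerProductSpace 𝕜 E]

variable (𝕜) in
/-- The columns `a j` of a matrix `A` with `A A^* = I`. -/
def IsParsevalFrame (a : ι → E) : Prop :=
  ∀ x : E, ∑ j, ⟪a j, x⟫_𝕜 • a j = x

namespace IsParsevalFrame

variable {a : ι → E}

lemma sum_sq_norm_inner (ha : IsParsevalFrame 𝕜 a) (x : E) :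
    ∑ j, ‖⟪a j, x⟫_𝕜‖ ^ 2 = ‖x‖ ^ 2 := by
  have h : ⟪x, x⟫_𝕜 = ∑ j, ⟪a j, x⟫_𝕜 * ⟪x, a j⟫_𝕜 := by
    calc ⟪x, x⟫_𝕜 = ⟪x, ∑ j, ⟪a j, x⟫_𝕜 • a j⟫_𝕜 := by rw [ha x]
      _ = _ := by simp only [inner_sum, inner_smul_right]
  simp only [inner_self_eq_norm_sq_to_K, ← inner_conj_symm x, RCLike.mul_conj] at h
  exact_mod_cast h.symm

lemma sum_sq_norm_inner_sub (ha : IsParsevalFrame 𝕜 a) (x : E) (c : ι → 𝕜) :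
    ∑ j, ‖⟪a j, x⟫_𝕜 - c j‖ ^ 2 =
      ‖x - ∑ j, c j • a j‖ ^ 2 + (∑ j, ‖c j‖ ^ 2 - ‖∑ j, c j • a j‖ ^ 2) := by
  have hinner : ⟪x, ∑ j, c j • a j⟫_𝕜 = ∑ j, ⟪⟪a j, x⟫_𝕜, c j⟫_𝕜 := by
    simp only [inner_sum, inner_smul_right, RCLike.inner_apply, inner_conj_symm]
  calc ∑ j, ‖⟪a j, x⟫_𝕜 - c j‖ ^ 2
      = ∑ j, (‖⟪a j, x⟫_𝕜‖ ^ 2 - 2 * RCLike.re ⟪⟪a j, x⟫_𝕜, c j⟫_𝕜 + ‖c j‖ ^ 2) := by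
        simp only [norm_sub_sq (𝕜 := 𝕜)]
    _ = ‖x‖ ^ 2 - 2 * RCLike.re ⟪x, ∑ j, c j • a j⟫_𝕜 + ∑ j, ‖c j‖ ^ 2 := by
        rw [sum_add_distrib, sum_sub_distrib, ha.sum_sq_norm_inner, hinner, map_sum, mul_sum]
    _ = _ := by rw [norm_sub_sq (𝕜 := 𝕜)]; ring

lemma norm_sum_smul_le (ha : IsParsevalFrame 𝕜 a) (c : ι → 𝕜) :
    ‖∑ j, c j • a j‖ ≤ √(∑ j, ‖c j‖ ^ 2) := by
  have h := ha.sum_sq_norm_inner_sub (∑ j, c j • a j) c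
  rw [sub_self, norm_zero] at h
  refine Real.le_sqrt_of_sq_le ?_
  linarith [sum_nonneg fun j (_ : j ∈ univ) => sq_nonneg ‖⟪a j, ∑ j, c j • a j⟫_𝕜 - c j‖]

end IsParsevalFrame

end ParsevalFrame

section AlternatingProjection

variable {ι E : Type*} [Fintype ι] [NormedAddCommGroup E] [InnerProductSpace ℂ E]
  {a : ι → E} {b : EuclideanSpace ℝ ι} {X : Set E} {P : E → E}

variable (a b P) in
noncomputable def apStep (x : E) : E :=
  P (∑ j, ((b j : ℂ) * phase ⟪a j, x⟫_ℂ) • a j)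

variable (a b) in
noncomputable def amplitudeMisfit (x : E) : ℝ :=
  ∑ j, (‖⟪a j, x⟫_ℂ‖ - b j) ^ 2

variable (a b P) in
def IsAPFixedPoint (x : E) : Prop :=
  ∃ u : ι → ℂ, (∀ j, ‖u j‖ = 1) ∧ (∀ j, ⟪a j, x⟫_ℂ ≠ 0 → u j = 1) ∧
    x = P (∑ j, ((b j : ℂ) * u j * phase ⟪a j, x⟫_ℂ) • a j)

lemma norm_apStep_le (ha : IsParsevalFrame ℂ a) (hP : IsNearestPointMap X P) (hX : Convex ℝ X)
    (h0 : 0 ∈ X) (x : E) : ‖apStep a b P x‖ ≤ ‖b‖ := by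
  let _ : InnerProductSpace ℝ E := InnerProductSpace.complexToReal
  refine ((hP.norm_le hX h0 _).trans (ha.norm_sum_smul_le _)).trans_eq ?_
  rw [EuclideanSpace.norm_eq]
  congr 1
  refine sum_congr rfl fun j _ => ?_
  rw [norm_mul, norm_phase, mul_one, Complex.norm_real]

lemma amplitudeMisfit_apStep_add_le (ha : IsParsevalFrame ℂ a) (hb : ∀ j, 0 ≤ b j)
    (hP : IsNearestPointMap X P) (hX : Convex ℝ X) {x : E} (hx : x ∈ X) :
    amplitudeMisfit a b (apStep a b P x) + ‖apStep a b P x - x‖ ^ 2 ≤ amplitudeMisfit a b x := by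
  let _ : InnerProductSpace ℝ E := InnerProductSpace.complexToReal
  set c : ι → ℂ := fun j => b j * phase ⟪a j, x⟫_ℂ
  set Y := ∑ j, c j • a j
  have hmajor : ∀ z, amplitudeMisfit a b z ≤ ∑ j, ‖⟪a j, z⟫_ℂ - c j‖ ^ 2 := fun z =>
    sum_le_sum fun j _ => by
      rw [← sq_abs, ← norm_sub_ofReal_mul_phase]
      gcongr
      exact norm_sub_ofReal_mul_phase_le _ (hb j) (norm_phase _)
  have htight : amplitudeMisfit a b x = ∑ j, ‖⟪a j, x⟫_ℂ - c j‖ ^ 2 :=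
    sum_congr rfl fun j _ => by rw [norm_sub_ofReal_mul_phase, sq_abs]
  have hproj := hP.sq_norm_sub_add_sq_norm_sub_le hX Y hx
  have hnext := hmajor (P Y)
  rw [ha.sum_sq_norm_inner_sub] at hnext htight
  change amplitudeMisfit a b (P Y) + ‖P Y - x‖ ^ 2 ≤ _
  rw [norm_sub_rev]
  linarith

lemma isAPFixedPoint_of_tendsto (hP : Continuous P) {y : ℕ → E} {x₀ : E}
    (hy : Tendsto y atTop (𝓝 x₀))
    (hreg : Tendsto (fun k => apStep a b P (y k) - y k) atTop (𝓝 0)) :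
    IsAPFixedPoint a b P x₀ := by
  obtain ⟨v, -, ψ, hψ, hv⟩ := (isCompact_closedBall (0 : ι → ℂ) 1).tendsto_subseq
    (x := fun k j => phase ⟪a j, y k⟫_ℂ) fun k => by
      rw [mem_closedBall_zero_iff, pi_norm_le_iff_of_nonneg zero_le_one]
      exact fun j => (norm_phase _).le
  have hyψ := hy.comp hψ.tendsto_atTop
  choose u hu_norm hu_one hu_eq using fun j =>
    exists_unimodular_of_tendsto_phase ((tendsto_const_nhds (x := a j)).inner hyψ)
      (tendsto_pi_nhds.mp hv j)
  have hlim : Tendsto (fun k => apStep a b P (y (ψ k))) atTop (𝓝 x₀) := by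
    simpa using (hreg.comp hψ.tendsto_atTop).add hyψ
  have hlim' : Tendsto (fun k => apStep a b P (y (ψ k))) atTop
      (𝓝 (P (∑ j, ((b j : ℂ) * u j * phase ⟪a j, x₀⟫_ℂ) • a j))) := by
    refine (hP.tendsto _).comp (tendsto_finsetSum _ fun j _ => ?_)
    rw [mul_assoc, ← hu_eq j]
    exact (tendsto_const_nhds.mul (tendsto_pi_nhds.mp hv j)).smul_const (a j)
  exact ⟨u, hu_norm, hu_one, tendsto_nhds_unique hlim hlim'⟩

end AlternatingProjection

theorem AP_limit_points_are_fixed_points_general {n N : ℕ}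
    (a : Fin N → EuclideanSpace ℂ (Fin n))
    (hiso : ∀ x : EuclideanSpace ℂ (Fin n), ∑ j, (inner ℂ (a j) x : ℂ) • a j = x)
    (x0 : EuclideanSpace ℂ (Fin n))
    (b : EuclideanSpace ℝ (Fin N)) (hb : ∀ j, b j = ‖(inner ℂ (a j) x0 : ℂ)‖)
    (X : Set (EuclideanSpace ℂ (Fin n)))
    (hXconv : Convex ℝ X) (h0X : (0 : EuclideanSpace ℂ (Fin n)) ∈ X)
    (P : EuclideanSpace ℂ (Fin n) → EuclideanSpace ℂ (Fin n))
    (hP : ∀ y, P y ∈ X ∧ ∀ z ∈ X, ‖y - P y‖ ≤ ‖y - z‖)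
    (x : ℕ → EuclideanSpace ℂ (Fin n)) (hx1 : x 1 ∈ X)
    (hrec : ∀ k ≥ 1, x (k+1) =
      P (∑ j, ((b j : ℂ) * phase (inner ℂ (a j) (x k) : ℂ)) • a j)) :
    (∀ k ≥ 2, ‖x k‖ ≤ ‖b‖) ∧
    Filter.Tendsto (fun k => ‖x (k+1) - x k‖) Filter.atTop (nhds 0) ∧
    (∀ (xstar : EuclideanSpace ℂ (Fin n)) (φ : ℕ → ℕ), StrictMono φ →
      Filter.Tendsto (fun k => x (φ k)) Filter.atTop (nhds xstar) →
      ∃ u : Fin N → ℂ, (∀ j, ‖u j‖ = 1) ∧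
        (∀ j, (inner ℂ (a j) xstar : ℂ) ≠ 0 → u j = 1) ∧
        xstar = P (∑ j, ((b j : ℂ) * u j * phase (inner ℂ (a j) xstar : ℂ)) • a j)) := by
  have ha : IsParsevalFrame ℂ a := hiso
  have hP : IsNearestPointMap X P := hP
  have hrec : ∀ k ≥ 1, x (k + 1) = apStep a b P (x k) := hrec
  have hmem : ∀ k ≥ 1, x k ∈ X := by
    rintro (_ | _ | m) hk
    · omega
    · exact hx1
    · rw [hrec (m + 1) (by omega)]
      exact (hP _).1
  have hdesc : ∀ k ≥ 1, amplitudeMisfit a b (x (k + 1)) + ‖x (k + 1) - x k‖ ^ 2 ≤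
      amplitudeMisfit a b (x k) := fun k hk => by
    rw [hrec k hk]
    exact amplitudeMisfit_apStep_add_le ha (fun j => hb j ▸ norm_nonneg _) hP hXconv (hmem k hk)
  have hasymp : Tendsto (fun k => ‖x (k + 1) - x k‖) atTop (𝓝 0) :=
    (tendsto_add_atTop_iff_nat 1).mp <| tendsto_zero_of_sq_add_le
      (d := fun k => amplitudeMisfit a b (x (k + 1)))
      (fun k => sum_nonneg fun j _ => sq_nonneg _) fun k => hdesc (k + 1) (by omega)
  refine ⟨fun k hk => ?_, hasymp, fun xstar φ hφ hlim => ?_⟩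
  · obtain ⟨m, rfl⟩ : ∃ m, k = m + 1 := ⟨k - 1, by omega⟩
    rw [hrec m (by omega)]
    exact norm_apStep_le ha hP hXconv h0X _
  · refine isAPFixedPoint_of_tendsto (hP.lipschitzWith_one hXconv).continuous hlim ?_
    rw [tendsto_zero_iff_norm_tendsto_zero]
    refine (hasymp.comp hφ.tendsto_atTop).congr' ?_
    filter_upwards [eventually_ge_atTop 1] with k hk
    rw [Function.comp_apply, hrec (φ k) (hk.trans (hφ.id_le k))]

/-- for the AP iteration `x^(k+1) = P_X(A(b ⊙ phase(A^* x^(k))))` with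
isometric `A^*` (Parseval frame condition on the columns `a j` of `A`) and `0 ∈ X`:
(i) `‖x^(k)‖ ≤ ‖b‖` for all `k ≥ 2`; (ii) `‖x^(k+1) - x^(k)‖ → 0`; (iii) every
accumulation point `x_*` of the sequence is a fixed point of AP, i.e. there is a
unimodular `u` with `u j = 1` wherever `(A^* x_*) j ≠ 0` such that
`x_* = P_X(A(b ⊙ u ⊙ phase(A^* x_*)))`. -/
theorem AP_limit_points_are_fixed_points {n N : ℕ}
    (a : Fin N → EuclideanSpace ℂ (Fin n))
    (hiso : ∀ x : EuclideanSpace ℂ (Fin n), ∑ j, (inner ℂ (a j) x : ℂ) • a j = x)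
    (x0 : EuclideanSpace ℂ (Fin n))
    (b : EuclideanSpace ℝ (Fin N)) (hb : ∀ j, b j = ‖(inner ℂ (a j) x0 : ℂ)‖)
    (X : Set (EuclideanSpace ℂ (Fin n))) (hXne : X.Nonempty)
    (hXc : IsClosed X) (hXconv : Convex ℝ X) (h0X : (0 : EuclideanSpace ℂ (Fin n)) ∈ X)
    (P : EuclideanSpace ℂ (Fin n) → EuclideanSpace ℂ (Fin n))
    (hP : ∀ y, P y ∈ X ∧ ∀ z ∈ X, ‖y - P y‖ ≤ ‖y - z‖)
    (x : ℕ → EuclideanSpace ℂ (Fin n)) (hx1 : x 1 ∈ X)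
    (hrec : ∀ k ≥ 1, x (k+1) =
      P (∑ j, ((b j : ℂ) * phase (inner ℂ (a j) (x k) : ℂ)) • a j)) :
    (∀ k ≥ 2, ‖x k‖ ≤ ‖b‖) ∧
    Filter.Tendsto (fun k => ‖x (k+1) - x k‖) Filter.atTop (nhds 0) ∧
    (∀ (xstar : EuclideanSpace ℂ (Fin n)) (φ : ℕ → ℕ), StrictMono φ →
      Filter.Tendsto (fun k => x (φ k)) Filter.atTop (nhds xstar) →
      ∃ u : Fin N → ℂ, (∀ j, ‖u j‖ = 1) ∧
        (∀ j, (inner ℂ (a j) xstar : ℂ) ≠ 0 → u j = 1) ∧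
        xstar = P (∑ j, ((b j : ℂ) * u j * phase (inner ℂ (a j) xstar : ℂ)) • a j)) :=
  AP_limit_points_are_fixed_points_general a hiso x0 b hb X hXconv h0X P hP x hx1 hrec
end

section
/- Let A ∈ ℂ^{n×N} satisfy A A^* = I_n, let b ∈ ℝ^N be entrywise nonnegative, and let X ⊆ ℂ^n be a nonempty closed convex set containing 0, with nearest-point projection P_X. Suppose x_* ∈ X is a fixed point of AP, i.e. there exists u ∈ ℂ^N with |u_j| = 1 for all j and u_j = 1 whenever (A^* x_*)_j ≠ 0 such that x_* = P_X(A(b ⊙ u ⊙ phase(A^* x_*))). Then ‖x_*‖ ≤ ‖b‖; if ‖x_*‖ = ‖b‖ then |A^* x_*| = b (entrywise), i.e. x_* is a phase-retrieval solution; and conversely, if |A^* x_*| ≠ b then ‖x_*‖ < ‖b‖. -/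
/-!
Write `c j = ⟪a j, x⋆⟫` and `y = ∑ j, b j u j phase(c j) a j`, so that `x⋆ = P y`. Since `0 ∈ X`,
the variational inequality of the projection onto the convex set `X` gives
`‖x⋆‖² ≤ Re ⟪y, x⋆⟫`, and the fixed-point condition on `u` makes `Re ⟪y, x⋆⟫ = ∑ j, b j |c j|`.
By the Parseval identity `‖x⋆‖ = ‖|c|‖`, so with `v = |c| ∈ ℝ^N` this reads `‖v‖² ≤ ⟪b, v⟫`,
i.e. `‖b - v‖² + ‖v‖² ≤ ‖b‖²`. All three claims follow.
-/

open Filter Topology ComplexConjugate RCLike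

section InnerProductSpace

variable {𝕜 E : Type*} [RCLike 𝕜] [NormedAddCommGroup E] [InnerProductSpace 𝕜 E]

local notation "⟪" x ", " y "⟫" => inner 𝕜 x y

theorem norm_sq_eq_sum_norm_inner_sq {ι : Type*} [Fintype ι] (a : ι → E) {x : E}
    (hx : ∑ j, ⟪a j, x⟫ • a j = x) : ‖x‖ ^ 2 = ∑ j, ‖⟪a j, x⟫‖ ^ 2 := by
  have h : (‖x‖ : 𝕜) ^ 2 = ∑ j, conj ⟪a j, x⟫ * ⟪a j, x⟫ := by
    rw [← inner_self_eq_norm_sq_to_K]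
    conv_lhs => arg 2; rw [← hx]
    simp only [sum_inner, inner_smul_left]
  simp only [RCLike.conj_mul] at h
  exact_mod_cast h

variable [Module ℝ E] [IsScalarTower ℝ 𝕜 E] {X : Set E}

theorem re_inner_sub_nonpos_of_forall_norm_sub_le (hX : Convex ℝ X) {y p z : E} (hp : p ∈ X)
    (hz : z ∈ X) (hmin : ∀ w ∈ X, ‖y - p‖ ≤ ‖y - w‖) : re ⟪y - p, z - p⟫ ≤ 0 := by
  have hsmall : ∀ t ∈ Set.Ioc (0 : ℝ) 1, 2 * re ⟪y - p, z - p⟫ ≤ t * ‖z - p‖ ^ 2 := by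
    rintro t ⟨ht0, ht1⟩
    have hmem : p + t • (z - p) ∈ X := hX.add_smul_sub_mem hp hz ⟨ht0.le, ht1⟩
    have hle := pow_le_pow_left₀ (norm_nonneg _) (hmin _ hmem) 2
    rw [← sub_sub, RCLike.real_smul_eq_coe_smul (K := 𝕜), norm_sub_sq (𝕜 := 𝕜) (y - p),
      inner_smul_right, norm_smul, RCLike.re_ofReal_mul, RCLike.norm_ofReal, abs_of_pos ht0] at hle
    nlinarith
  have hlim : Tendsto (fun t : ℝ => t * ‖z - p‖ ^ 2) (𝓝[>] 0) (𝓝 0) :=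
    tendsto_nhdsWithin_of_tendsto_nhds <| by
      simpa using (continuous_mul_const (‖z - p‖ ^ 2)).tendsto 0
  have h2 : 2 * re ⟪y - p, z - p⟫ ≤ 0 :=
    ge_of_tendsto hlim (by filter_upwards [Ioc_mem_nhdsGT one_pos] using hsmall)
  linarith

theorem norm_sq_le_re_inner_of_forall_norm_sub_le (hX : Convex ℝ X) (h0 : 0 ∈ X) {y p : E}
    (hp : p ∈ X) (hmin : ∀ w ∈ X, ‖y - p‖ ≤ ‖y - w‖) : ‖p‖ ^ 2 ≤ re ⟪y, p⟫ := by
  have hvar := re_inner_sub_nonpos_of_forall_norm_sub_le (𝕜 := 𝕜) hX hp h0 hmin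
  rw [zero_sub, inner_neg_right, inner_sub_left, inner_self_eq_norm_sq_to_K, map_neg,
    map_sub] at hvar
  simp only [← RCLike.ofReal_pow, RCLike.ofReal_re] at hvar
  linarith

end InnerProductSpace

section RealInnerProductSpace

variable {F : Type*} [NormedAddCommGroup F] [InnerProductSpace ℝ F] {b v : F}

theorem norm_sub_sq_add_norm_sq_le (h : ‖v‖ ^ 2 ≤ inner ℝ b v) :
    ‖b - v‖ ^ 2 + ‖v‖ ^ 2 ≤ ‖b‖ ^ 2 := by
  rw [norm_sub_sq_real]
  linarith

theorem norm_le_of_norm_sq_le_inner (h : ‖v‖ ^ 2 ≤ inner ℝ b v) : ‖v‖ ≤ ‖b‖ :=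
  le_of_sq_le_sq (by linarith [norm_sub_sq_add_norm_sq_le h, sq_nonneg ‖b - v‖]) (norm_nonneg b)

theorem eq_of_norm_sq_le_inner_of_norm_eq (h : ‖v‖ ^ 2 ≤ inner ℝ b v) (hnorm : ‖v‖ = ‖b‖) :
    v = b := by
  have hbv := norm_sub_sq_add_norm_sq_le h
  rw [hnorm, add_le_iff_nonpos_left] at hbv
  have : ‖b - v‖ = 0 := pow_eq_zero_iff two_ne_zero |>.mp (le_antisymm hbv (sq_nonneg _))
  exact (sub_eq_zero.mp (norm_eq_zero.mp this)).symm

end RealInnerProductSpace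

theorem conj_phase_mul_self (z : ℂ) : conj (phase z) * z = ‖z‖ := by
  unfold phase
  split_ifs with hz
  · simp [hz]
  · have : (‖z‖ : ℂ) ≠ 0 := by exact_mod_cast norm_ne_zero_iff.mpr hz
    rw [map_div₀, Complex.conj_ofReal, div_mul_eq_mul_div, Complex.conj_mul']
    field_simp

theorem inner_sum_mul_phase_smul {E ι : Type*} [NormedAddCommGroup E] [InnerProductSpace ℂ E]
    [Fintype ι] (a : ι → E) (b : ι → ℝ) (u : ι → ℂ) (x : E)
    (hu : ∀ j, inner ℂ (a j) x ≠ 0 → u j = 1) :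
    inner ℂ (∑ j, (b j * u j * phase (inner ℂ (a j) x)) • a j) x =
      ((∑ j, b j * ‖inner ℂ (a j) x‖ : ℝ) : ℂ) := by
  push_cast
  rw [sum_inner]
  refine Finset.sum_congr rfl fun j _ => ?_
  rw [inner_smul_left, map_mul, mul_assoc, conj_phase_mul_self, map_mul, Complex.conj_ofReal]
  by_cases hj : inner ℂ (a j) x = 0
  · simp [hj]
  · simp [hu j hj]

theorem AP_fixed_point_norm_criterion_general {n N : ℕ}
    (a : Fin N → EuclideanSpace ℂ (Fin n))
    (hiso : ∀ x : EuclideanSpace ℂ (Fin n), ∑ j, (inner ℂ (a j) x : ℂ) • a j = x)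
    (b : EuclideanSpace ℝ (Fin N))
    (X : Set (EuclideanSpace ℂ (Fin n)))
    (hXconv : Convex ℝ X) (h0X : (0 : EuclideanSpace ℂ (Fin n)) ∈ X)
    (P : EuclideanSpace ℂ (Fin n) → EuclideanSpace ℂ (Fin n))
    (hP : ∀ y, P y ∈ X ∧ ∀ z ∈ X, ‖y - P y‖ ≤ ‖y - z‖)
    (xstar : EuclideanSpace ℂ (Fin n)) (hxX : xstar ∈ X)
    (u : Fin N → ℂ)
    (hu2 : ∀ j, (inner ℂ (a j) xstar : ℂ) ≠ 0 → u j = 1)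
    (hfix : xstar = P (∑ j, ((b j : ℂ) * u j * phase (inner ℂ (a j) xstar : ℂ)) • a j)) :
    ‖xstar‖ ≤ ‖b‖ ∧
    (‖xstar‖ = ‖b‖ → ∀ j, ‖(inner ℂ (a j) xstar : ℂ)‖ = b j) ∧
    ((¬ ∀ j, ‖(inner ℂ (a j) xstar : ℂ)‖ = b j) → ‖xstar‖ < ‖b‖) := by
  set v : EuclideanSpace ℝ (Fin N) := WithLp.toLp 2 fun j => ‖inner ℂ (a j) xstar‖
  have hv : ‖v‖ = ‖xstar‖ := by
    refine (sq_eq_sq₀ (norm_nonneg _) (norm_nonneg _)).mp ?_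
    simp [v, EuclideanSpace.norm_sq_eq, norm_sq_eq_sum_norm_inner_sq a (hiso xstar)]
  set y := ∑ j, ((b j : ℂ) * u j * phase (inner ℂ (a j) xstar)) • a j
  have hmin := (hP y).2
  rw [← hfix] at hmin
  have hproj : ‖xstar‖ ^ 2 ≤ (inner ℂ y xstar).re :=
    norm_sq_le_re_inner_of_forall_norm_sub_le (𝕜 := ℂ) hXconv h0X hxX hmin
  rw [inner_sum_mul_phase_smul a b u xstar hu2, Complex.ofReal_re, ← hv] at hproj
  have hbv : ‖v‖ ^ 2 ≤ inner ℝ b v := by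
    simpa [v, PiLp.inner_apply, mul_comm] using hproj
  have hle : ‖xstar‖ ≤ ‖b‖ := hv ▸ norm_le_of_norm_sq_le_inner hbv
  have heq (h : ‖xstar‖ = ‖b‖) : v = b := eq_of_norm_sq_le_inner_of_norm_eq hbv (hv ▸ h)
  exact ⟨hle, fun h j => congrArg (· j) (heq h),
    fun hne => hle.lt_of_ne fun h => hne fun j => congrArg (· j) (heq h)⟩

/-- norm criterion for fixed points of AP. If `A A^*= I` (Parseval frame
condition on the columns `a j` of `A`), `b` is entrywise nonnegative, `X` is a nonempty
closed convex set containing `0` with nearest-point projection `P`, and `x_* ∈ X` is a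
fixed point of AP (witnessed by `u`), then `‖x_*‖ ≤ ‖b‖`; if `‖x_*‖ = ‖b‖` then
`|A^* x_*| = b` entrywise; and if `|A^* x_*| ≠ b` then `‖x_*‖ < ‖b‖`. -/
theorem AP_fixed_point_norm_criterion {n N : ℕ}
    (a : Fin N → EuclideanSpace ℂ (Fin n))
    (hiso : ∀ x : EuclideanSpace ℂ (Fin n), ∑ j, (inner ℂ (a j) x : ℂ) • a j = x)
    (b : EuclideanSpace ℝ (Fin N)) (hbpos : ∀ j, 0 ≤ b j)
    (X : Set (EuclideanSpace ℂ (Fin n))) (hXne : X.Nonempty)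
    (hXc : IsClosed X) (hXconv : Convex ℝ X) (h0X : (0 : EuclideanSpace ℂ (Fin n)) ∈ X)
    (P : EuclideanSpace ℂ (Fin n) → EuclideanSpace ℂ (Fin n))
    (hP : ∀ y, P y ∈ X ∧ ∀ z ∈ X, ‖y - P y‖ ≤ ‖y - z‖)
    (xstar : EuclideanSpace ℂ (Fin n)) (hxX : xstar ∈ X)
    (u : Fin N → ℂ) (hu1 : ∀ j, ‖u j‖ = 1)
    (hu2 : ∀ j, (inner ℂ (a j) xstar : ℂ) ≠ 0 → u j = 1)
    (hfix : xstar = P (∑ j, ((b j : ℂ) * u j * phase (inner ℂ (a j) xstar : ℂ)) • a j)) :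
    ‖xstar‖ ≤ ‖b‖ ∧
    (‖xstar‖ = ‖b‖ → ∀ j, ‖(inner ℂ (a j) xstar : ℂ)‖ = b j) ∧
    ((¬ ∀ j, ‖(inner ℂ (a j) xstar : ℂ)‖ = b j) → ‖xstar‖ < ‖b‖) :=
  AP_fixed_point_norm_criterion_general a hiso b X hXconv h0X P hP xstar hxX u hu2 hfix
end

section
/- Let A ∈ ℂ^{n×N} with columns a_1,…,a_N satisfy A A^* = I_n, let x0 ∈ ℂ^n, b_j = |a_j^* x0|, J = {j : b_j > 0}, and F(x) = (1/2) Σ_{j=1}^N (|a_j^* x| − b_j)². Suppose x ∈ ℂ^n satisfies a_j^* x ≠ 0 for all j ∈ J. Then for every ζ ∈ ℂ^n the real directional derivative of F at x along ζ equals Re(x^* ζ) − Σ_{j∈J} b_j · Re( conj(phase(a_j^* x)) · (a_j^* ζ) ), i.e. d/dt F(x + tζ)|_{t=0} = ⟨x, ζ⟩_ℝ − Σ_{j∈J} b_j Re((B_x^* ζ)_j). -/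
open scoped RealInnerProductSpace ComplexConjugate

section RealInnerProductSpace

variable {F : Type*} [NormedAddCommGroup F] [InnerProductSpace ℝ F]
  {f : ℝ → F} {f' : F} {t : ℝ}

theorem HasDerivAt.norm (hf : HasDerivAt f f' t) (h0 : f t ≠ 0) :
    HasDerivAt (‖f ·‖) (⟪f t, f'⟫ / ‖f t‖) t := by
  have hsq : HasDerivAt (fun s => √(‖f s‖ ^ 2)) (2 * ⟪f t, f'⟫ / (2 * √(‖f t‖ ^ 2))) t :=
    hf.norm_sq.sqrt (by positivity)
  simp only [Real.sqrt_sq (norm_nonneg _)] at hsq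
  convert hsq using 1
  field_simp

theorem HasDerivAt.sq_norm_sub (β : ℝ) (hf : HasDerivAt f f' t) (h : f t ≠ 0 ∨ β = 0) :
    HasDerivAt (fun s => (‖f s‖ - β) ^ 2) (2 * ⟪f t, f'⟫ - 2 * β * (⟪f t, f'⟫ / ‖f t‖)) t := by
  obtain h0 | rfl := h
  · have hexp : (fun s => (‖f s‖ - β) ^ 2) = fun s => ‖f s‖ ^ 2 - 2 * β * ‖f s‖ + β ^ 2 := by
      funext s; ring
    rw [hexp]
    exact ((hf.norm_sq.sub ((hf.norm h0).const_mul (2 * β))).add_const _)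
  · simpa using hf.norm_sq

end RealInnerProductSpace

theorem Complex.real_inner_div_norm_eq_re_conj_phase_mul (c d : ℂ) (hc : c ≠ 0) :
    ⟪c, d⟫ / ‖c‖ = (conj (phase c) * d).re := by
  rw [Complex.inner, phase, if_neg hc, map_div₀, Complex.conj_ofReal, div_mul_eq_mul_div,
    Complex.div_ofReal_re, mul_comm]

theorem hasDerivAt_sq_norm_line_sub (c d : ℂ) (β : ℝ) (h : c ≠ 0 ∨ β = 0) :
    HasDerivAt (fun t : ℝ => (‖c + t * d‖ - β) ^ 2)
      (2 * (conj c * d).re - 2 * β * (conj (phase c) * d).re) 0 := by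
  have hline : HasDerivAt (fun t : ℝ => c + t * d) d 0 := by
    simpa using ((hasDerivAt_id (0 : ℝ)).ofReal_comp.mul_const d).const_add c
  have := hline.sq_norm_sub β (by simpa using h)
  simp only [Complex.ofReal_zero, zero_mul, add_zero] at this
  obtain hc | rfl := h
  · rwa [Complex.real_inner_div_norm_eq_re_conj_phase_mul c d hc, Complex.inner,
      mul_comm d] at this
  · simpa [Complex.inner, mul_comm d] using this

theorem inner_eq_sum_conj_inner_mul_inner {𝕜 E ι : Type*} [RCLike 𝕜] [NormedAddCommGroup E]
    [InnerProductSpace 𝕜 E] [Fintype ι] (a : ι → E)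
    (hframe : ∀ x : E, ∑ j, inner 𝕜 (a j) x • a j = x) (x y : E) :
    inner 𝕜 x y = ∑ j, conj (inner 𝕜 (a j) x) * inner 𝕜 (a j) y := by
  conv_lhs => rw [← hframe y]
  simp only [inner_sum, inner_smul_right, inner_conj_symm, mul_comm]

/-- first directional derivative of the phase-retrieval objective `F`.
For isometric `A^*` (Parseval frame condition on the columns `a j` of `A`) and a point
`x` with `a_j^* x ≠ 0` for all `j ∈ J`, the real directional derivative of `F` at `x`
along `ζ` is `Re(x^* ζ) - Σ_{j ∈ J} b j · Re(conj(phase(a_j^* x)) · (a_j^* ζ))`. -/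
theorem AP_first_derivative {n N : ℕ} (a : Fin N → EuclideanSpace ℂ (Fin n))
    (hiso : ∀ x : EuclideanSpace ℂ (Fin n), ∑ j, (inner ℂ (a j) x : ℂ) • a j = x)
    (x0 : EuclideanSpace ℂ (Fin n))
    (b : Fin N → ℝ) (hb : ∀ j, b j = ‖(inner ℂ (a j) x0 : ℂ)‖)
    (J : Finset (Fin N)) (hJ : ∀ j, j ∈ J ↔ 0 < b j)
    (F : EuclideanSpace ℂ (Fin n) → ℝ)
    (hF : ∀ x, F x = (1/2) * ∑ j, (‖(inner ℂ (a j) x : ℂ)‖ - b j)^2)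
    (x : EuclideanSpace ℂ (Fin n)) (hx : ∀ j ∈ J, (inner ℂ (a j) x : ℂ) ≠ 0)
    (ζ : EuclideanSpace ℂ (Fin n)) :
    HasDerivAt (fun t : ℝ => F (x + t • ζ))
      ((inner ℂ x ζ : ℂ).re -
        ∑ j ∈ J, b j * ((starRingEnd ℂ) (phase (inner ℂ (a j) x : ℂ)) *
          (inner ℂ (a j) ζ : ℂ)).re) 0 := by
  set c : Fin N → ℂ := fun j => inner ℂ (a j) x
  set d : Fin N → ℂ := fun j => inner ℂ (a j) ζ
  have hb_zero : ∀ j ∉ J, b j = 0 := fun j hj =>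
    le_antisymm (not_lt.mp (hj ∘ (hJ j).mpr)) (hb j ▸ norm_nonneg _)
  have hF_line : (fun t : ℝ => F (x + t • ζ)) =
      fun t : ℝ => (1/2) * ∑ j, (‖c j + t * d j‖ - b j) ^ 2 := by
    funext t
    simp only [hF, c, d, inner_add_right, ← Complex.coe_smul, inner_smul_right]
  have hJ_sum : ∑ j, b j * (conj (phase (c j)) * d j).re =
      ∑ j ∈ J, b j * (conj (phase (c j)) * d j).re :=
    (Finset.sum_subset J.subset_univ fun j _ hj => by rw [hb_zero j hj, zero_mul]).symm
  have hsum := (HasDerivAt.fun_sum fun j (_ : j ∈ Finset.univ) =>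
    hasDerivAt_sq_norm_line_sub (c j) (d j) (b j)
      ((em (j ∈ J)).imp (hx j) (hb_zero j))).const_mul (1/2 : ℝ)
  rw [hF_line]
  refine hsum.congr_deriv ?_
  rw [inner_eq_sum_conj_inner_mul_inner a hiso, Complex.re_sum, ← hJ_sum,
    ← Finset.sum_sub_distrib, Finset.mul_sum]
  exact Finset.sum_congr rfl fun j _ => by ring
end

section
/- Let A ∈ ℂ^{n×N} with columns a_1,…,a_N satisfy A A^* = I_n, let x0 ∈ ℂ^n, b_j = |a_j^* x0|, J = {j : b_j > 0}, and F(x) = (1/2) Σ_{j=1}^N (|a_j^* x| − b_j)². Suppose x ∈ ℂ^n satisfies a_j^* x ≠ 0 for all j ∈ J. Then for every ζ ∈ ℂ^n the second derivative of t ↦ F(x + tζ) at t = 0 equals ‖ζ‖² − Σ_{j∈J} (b_j / |a_j^* x|) · ( Im( conj(phase(a_j^* x)) · (a_j^* ζ) ) )². -/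
open Filter Topology
open scoped RealInnerProductSpace ComplexConjugate

theorem hasDerivAt_deriv_finset_sum {ι : Type*} {s : Finset ι} {f f' : ι → ℝ → ℝ}
    {f'' : ι → ℝ} {t₀ : ℝ} (hf : ∀ i ∈ s, ∀ᶠ t in 𝓝 t₀, HasDerivAt (f i) (f' i t) t)
    (hf' : ∀ i ∈ s, HasDerivAt (f' i) (f'' i) t₀) :
    HasDerivAt (deriv fun t => ∑ i ∈ s, f i t) (∑ i ∈ s, f'' i) t₀ := by
  have hderiv : deriv (fun t => ∑ i ∈ s, f i t) =ᶠ[𝓝 t₀] fun t => ∑ i ∈ s, f' i t := by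
    filter_upwards [(eventually_all_finset s).2 hf] with t ht
    exact (HasDerivAt.fun_sum ht).deriv
  exact (HasDerivAt.fun_sum hf').congr_of_eventuallyEq hderiv

section RealInnerProductSpace

variable {F : Type*} [NormedAddCommGroup F] [InnerProductSpace ℝ F]

theorem HasDerivAt.norm_of_ne_zero {f : ℝ → F} {f' : F} {t : ℝ} (hf : HasDerivAt f f' t)
    (h0 : f t ≠ 0) : HasDerivAt (‖f ·‖) (⟪f t, f'⟫ / ‖f t‖) t := by
  have hsq : ‖f t‖ ^ 2 ≠ 0 := by positivity
  convert hf.norm_sq.sqrt hsq using 1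
  · simp only [Real.sqrt_sq (norm_nonneg _)]
  · rw [Real.sqrt_sq (norm_nonneg _)]
    ring

variable (c d : F) (b : ℝ)

theorem hasDerivAt_add_smul (t : ℝ) : HasDerivAt (fun s : ℝ => c + s • d) d t := by
  simpa using ((hasDerivAt_id t).smul_const d).const_add c

theorem hasDerivAt_inner_add_smul (t : ℝ) :
    HasDerivAt (fun s : ℝ => ⟪c + s • d, d⟫) (‖d‖ ^ 2) t := by
  simpa [real_inner_self_eq_norm_sq] using
    (hasDerivAt_add_smul c d t).inner ℝ (hasDerivAt_const t d)

theorem hasDerivAt_half_sq_norm_add_smul_sub {t : ℝ} (h : b = 0 ∨ c + t • d ≠ 0) :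
    HasDerivAt (fun s : ℝ => (‖c + s • d‖ - b) ^ 2 / 2)
      (⟪c + t • d, d⟫ - b * (⟪c + t • d, d⟫ / ‖c + t • d‖)) t := by
  rcases h with rfl | h
  · simpa using ((hasDerivAt_add_smul c d t).norm_sq).div_const 2
  · refine ((((hasDerivAt_add_smul c d t).norm_of_ne_zero h).sub_const b).pow 2).div_const 2
      |>.congr_deriv ?_
    have : ‖c + t • d‖ ≠ 0 := norm_ne_zero_iff.2 h
    field_simp
    ring

theorem eventually_hasDerivAt_half_sq_norm_add_smul_sub (h : b = 0 ∨ c ≠ 0) :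
    ∀ᶠ t in 𝓝 0, HasDerivAt (fun s : ℝ => (‖c + s • d‖ - b) ^ 2 / 2)
      (⟪c + t • d, d⟫ - b * (⟪c + t • d, d⟫ / ‖c + t • d‖)) t := by
  rcases h with hb | hc
  · exact .of_forall fun t => hasDerivAt_half_sq_norm_add_smul_sub c d b (.inl hb)
  · have hne : ∀ᶠ t in 𝓝 (0 : ℝ), c + t • d ≠ 0 :=
      (hasDerivAt_add_smul c d 0).continuousAt.eventually_ne (by simpa using hc)
    filter_upwards [hne] with t ht
    exact hasDerivAt_half_sq_norm_add_smul_sub c d b (.inr ht)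

theorem hasDerivAt_inner_add_smul_div_norm (hc : c ≠ 0) :
    HasDerivAt (fun s : ℝ => ⟪c + s • d, d⟫ / ‖c + s • d‖)
      ((‖c‖ ^ 2 * ‖d‖ ^ 2 - ⟪c, d⟫ ^ 2) / ‖c‖ ^ 3) 0 := by
  have hnorm := (hasDerivAt_add_smul c d 0).norm_of_ne_zero (by simpa using hc)
  refine ((hasDerivAt_inner_add_smul c d 0).div hnorm (by simpa using hc)).congr_deriv ?_
  simp only [zero_smul, add_zero]
  have : ‖c‖ ≠ 0 := norm_ne_zero_iff.2 hc
  field_simp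

theorem hasDerivAt_inner_add_smul_sub_mul_div_norm (h : b = 0 ∨ c ≠ 0) :
    HasDerivAt (fun s : ℝ => ⟪c + s • d, d⟫ - b * (⟪c + s • d, d⟫ / ‖c + s • d‖))
      (‖d‖ ^ 2 - b * ((‖c‖ ^ 2 * ‖d‖ ^ 2 - ⟪c, d⟫ ^ 2) / ‖c‖ ^ 3)) 0 := by
  rcases h with rfl | hc
  · simpa using hasDerivAt_inner_add_smul c d 0
  · exact (hasDerivAt_inner_add_smul c d 0).sub
      ((hasDerivAt_inner_add_smul_div_norm c d hc).const_mul b)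

end RealInnerProductSpace

theorem sum_norm_inner_sq_eq_norm_sq {𝕜 E ι : Type*} [RCLike 𝕜] [NormedAddCommGroup E]
    [InnerProductSpace 𝕜 E] [Fintype ι] {a : ι → E}
    (ha : ∀ x, ∑ j, (inner 𝕜 (a j) x : 𝕜) • a j = x) (x : E) :
    ∑ j, ‖(inner 𝕜 (a j) x : 𝕜)‖ ^ 2 = ‖x‖ ^ 2 := by
  have h := congrArg (fun y => RCLike.re (inner 𝕜 x y : 𝕜)) (ha x)
  have hterm : ∀ j, RCLike.re (inner 𝕜 x ((inner 𝕜 (a j) x : 𝕜) • a j) : 𝕜)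
      = ‖(inner 𝕜 (a j) x : 𝕜)‖ ^ 2 := fun j => by
    rw [inner_smul_right, ← inner_conj_symm (a j) x, RCLike.conj_mul]
    norm_cast
    rw [RCLike.norm_conj]
  simpa only [inner_sum, map_sum, hterm, inner_self_eq_norm_sq] using h

theorem Complex.norm_sq_mul_norm_sq_sub_inner_sq_eq_phase (c d : ℂ) :
    ‖c‖ ^ 2 * ‖d‖ ^ 2 - ⟪c, d⟫ ^ 2 = ‖c‖ ^ 2 * (conj (phase c) * d).im ^ 2 := by
  rcases eq_or_ne c 0 with rfl | hc
  · simp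
  have hnorm : ‖c‖ ≠ 0 := norm_ne_zero_iff.2 hc
  have hpyth : ‖c‖ ^ 2 * ‖d‖ ^ 2 = (conj c * d).re ^ 2 + (conj c * d).im ^ 2 := by
    rw [← mul_pow, ← Complex.norm_conj c, ← norm_mul, Complex.sq_norm, Complex.normSq_apply]
    ring
  rw [phase, if_neg hc, map_div₀, Complex.conj_ofReal, div_mul_eq_mul_div,
    Complex.div_ofReal_im, Complex.inner, mul_comm d, hpyth]
  field_simp
  ring

/-- second derivative of the phase-retrieval objective `F` along a direction.
For isometric `A^*` (Parseval frame condition on the columns `a j` of `A`) and a point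
`x` with `a_j^* x ≠ 0` for all `j ∈ J`, the second derivative of `t ↦ F(x + tζ)` at
`t = 0` equals `‖ζ‖² - Σ_{j ∈ J} (b j / |a_j^* x|) · (Im(conj(phase(a_j^* x))·(a_j^* ζ)))²`. -/
theorem AP_second_derivative {n N : ℕ} (a : Fin N → EuclideanSpace ℂ (Fin n))
    (hiso : ∀ x : EuclideanSpace ℂ (Fin n), ∑ j, (inner ℂ (a j) x : ℂ) • a j = x)
    (x0 : EuclideanSpace ℂ (Fin n))
    (b : Fin N → ℝ) (hb : ∀ j, b j = ‖(inner ℂ (a j) x0 : ℂ)‖)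
    (J : Finset (Fin N)) (hJ : ∀ j, j ∈ J ↔ 0 < b j)
    (F : EuclideanSpace ℂ (Fin n) → ℝ)
    (hF : ∀ x, F x = (1/2) * ∑ j, (‖(inner ℂ (a j) x : ℂ)‖ - b j)^2)
    (x : EuclideanSpace ℂ (Fin n)) (hx : ∀ j ∈ J, (inner ℂ (a j) x : ℂ) ≠ 0)
    (ζ : EuclideanSpace ℂ (Fin n)) :
    HasDerivAt (deriv (fun t : ℝ => F (x + t • ζ)))
      (‖ζ‖^2 -
        ∑ j ∈ J, (b j / ‖(inner ℂ (a j) x : ℂ)‖) *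
          (((starRingEnd ℂ) (phase (inner ℂ (a j) x : ℂ)) *
            (inner ℂ (a j) ζ : ℂ)).im)^2) 0 := by
  set c : Fin N → ℂ := fun j => inner ℂ (a j) x
  set d : Fin N → ℂ := fun j => inner ℂ (a j) ζ
  have hline : (fun t : ℝ => F (x + t • ζ)) = fun t => ∑ j, (‖c j + t • d j‖ - b j) ^ 2 / 2 := by
    funext t
    simp only [hF, Finset.mul_sum, inner_add_right, inner_smul_right_eq_smul, c, d]
    exact Finset.sum_congr rfl fun j _ => by ring
  have hb_off : ∀ j ∉ J, b j = 0 := fun j hj =>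
    le_antisymm (not_lt.1 ((hJ j).not.1 hj)) (hb j ▸ norm_nonneg _)
  have hterm : ∀ j, b j = 0 ∨ c j ≠ 0 := fun j =>
    if hj : j ∈ J then .inr (hx j hj) else .inl (hb_off j hj)
  have hvalue : ∑ j, (‖d j‖ ^ 2 - b j * ((‖c j‖ ^ 2 * ‖d j‖ ^ 2 - ⟪c j, d j⟫ ^ 2) / ‖c j‖ ^ 3))
      = ‖ζ‖ ^ 2 - ∑ j ∈ J, (b j / ‖c j‖) * ((starRingEnd ℂ) (phase (c j)) * d j).im ^ 2 := by
    rw [Finset.sum_sub_distrib, sum_norm_inner_sq_eq_norm_sq hiso,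
      ← Finset.sum_subset J.subset_univ fun j _ hj => by simp [hb_off j hj]]
    congr 1
    refine Finset.sum_congr rfl fun j hj => ?_
    have : ‖c j‖ ≠ 0 := norm_ne_zero_iff.2 (hx j hj)
    rw [Complex.norm_sq_mul_norm_sq_sub_inner_sq_eq_phase]
    field_simp
  rw [hline, ← hvalue]
  exact hasDerivAt_deriv_finset_sum
    (fun j _ => eventually_hasDerivAt_half_sq_norm_add_smul_sub _ _ _ (hterm j))
    (fun j _ => hasDerivAt_inner_add_smul_sub_mul_div_norm _ _ _ (hterm j))
end

section
/- Let n ≥ 2, let A ∈ ℂ^{n×N} satisfy A A^* = I_n, let x0 ∈ ℝ^n ⊆ ℂ^n be nonzero, and let B = A · diag(phase(A^* x0)). Then the orthogonality constraint can be removed in the definition of the second singular value over real vectors: sup{ ‖Im(B^* u)‖ : u ∈ ℝ^n, ⟨u, x0⟩ = 0, ‖u‖ = 1 } = sup{ ‖Im(B^* u)‖ : u ∈ ℝ^n, ‖u‖ = 1 }. -/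
/-!
The map `u ↦ Im(B^* u)` is `ℝ`-linear and kills `x0`, because `conj(phase z) * z = |z|` is
real. Hence it is unchanged when a real unit vector `u` is replaced by its component `w`
orthogonal to `x0`, which is again real, has norm at most one and is nonzero unless
`Im(B^* u) = 0`; normalising `w` can only increase `‖Im(B^* ·)‖`. If no real unit vector is orthogonal to
`x0`, this forces `Im(B^* u) = 0` for every real unit `u`, and both sides are `0` since
`sSup ∅ = 0` in `ℝ`.
-/

open Submodule RealInnerProductSpace

section OrthogonalReduction

variable {V F : Type*} [NormedAddCommGroup V] [InnerProductSpace ℝ V]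
  [NormedAddCommGroup F] [NormedSpace ℝ F]

theorem exists_orthogonal_unit_norm_apply_ge (K : Submodule ℝ V) {x₀ u : V} (hx₀ : x₀ ∈ K)
    (L : V →ₗ[ℝ] F) (hL : L x₀ = 0) (hu : u ∈ K) (hu₁ : ‖u‖ = 1) (hLu : L u ≠ 0) :
    ∃ v ∈ K, ⟪v, x₀⟫ = 0 ∧ ‖v‖ = 1 ∧ ‖L u‖ ≤ ‖L v‖ := by
  set w := u - (ℝ ∙ x₀).starProjection u
  obtain ⟨c, hc⟩ := mem_span_singleton.mp ((ℝ ∙ x₀).starProjection_apply_mem u)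
  have hLw : L w = L u := by simp [w, ← hc, hL]
  have hwK : w ∈ K := K.sub_mem hu (hc ▸ K.smul_mem c hx₀)
  have hw_orth : ⟪w, x₀⟫ = 0 :=
    mem_orthogonal_singleton_iff_inner_left.mp (sub_starProjection_mem_orthogonal u)
  have hw_le : ‖w‖ ≤ 1 := by
    simpa [starProjection_orthogonal, hu₁] using (ℝ ∙ x₀)ᗮ.norm_starProjection_apply_le u
  have hw_pos : 0 < ‖w‖ := norm_pos_iff.mpr fun h => hLu (by rw [← hLw, h, map_zero])
  refine ⟨‖w‖⁻¹ • w, K.smul_mem _ hwK, by rw [real_inner_smul_left, hw_orth, mul_zero],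
    norm_smul_inv_norm (norm_pos_iff.mp hw_pos), ?_⟩
  rw [map_smul, norm_smul, hLw, norm_inv, norm_norm]
  exact le_mul_of_one_le_left (norm_nonneg _) ((one_le_inv₀ hw_pos).mpr hw_le)

end OrthogonalReduction

theorem sSup_eq_of_subset_of_forall_pos_exists_ge {s t : Set ℝ} (hst : s ⊆ t)
    (ht : BddAbove t) (ht₀ : ∀ r ∈ t, 0 ≤ r) (h : ∀ r ∈ t, 0 < r → ∃ r' ∈ s, r ≤ r') :
    sSup s = sSup t := by
  have hs₀ : 0 ≤ sSup s := Real.sSup_nonneg fun r hr => ht₀ r (hst hr)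
  refine le_antisymm ?_ (Real.sSup_le (fun r hr => ?_) hs₀)
  · rcases s.eq_empty_or_nonempty with hs | hs
    · rw [hs, Real.sSup_empty]
      exact Real.sSup_nonneg ht₀
    · exact csSup_le_csSup ht hs hst
  · rcases (ht₀ r hr).eq_or_lt with rfl | hr₀
    · exact hs₀
    · obtain ⟨r', hr', hle⟩ := h r hr hr₀
      exact hle.trans (le_csSup (ht.mono hst) hr')

theorem im_conj_phase_mul_self (z : ℂ) : ((starRingEnd ℂ) (phase z) * z).im = 0 := by
  unfold phase
  split_ifs with h
  · simp [h]
  · rw [map_div₀, Complex.conj_ofReal, div_mul_eq_mul_div, ← Complex.normSq_eq_conj_mul_self,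
      ← Complex.ofReal_div]
    exact Complex.ofReal_im _

theorem EuclideanSpace.real_inner_eq_re_inner {ι : Type*} [Fintype ι]
    (x y : EuclideanSpace ℂ ι) : ⟪x, y⟫ = (inner ℂ x y).re := by
  simp [PiLp.inner_apply, Complex.re_sum, Complex.inner]

variable {n N : ℕ}

def realVectors (n : ℕ) : Submodule ℝ (EuclideanSpace ℂ (Fin n)) where
  carrier := {u | ∀ i, (u i).im = 0}
  add_mem' hu hv i := by simp [hu i, hv i]
  zero_mem' i := by simp
  smul_mem' c u hu i := by simp [hu i]

/-- The `ℝ`-linear map `u ↦ Im(B^* u)`, where `a j` are the columns of `A`. -/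
noncomputable def imPhasedAnalysis (a : Fin N → EuclideanSpace ℂ (Fin n))
    (x₀ : EuclideanSpace ℂ (Fin n)) : EuclideanSpace ℂ (Fin n) →ₗ[ℝ] EuclideanSpace ℝ (Fin N) where
  toFun u := WithLp.toLp 2 fun j =>
    ((starRingEnd ℂ) (phase (inner ℂ (a j) x₀)) * inner ℂ (a j) u).im
  map_add' u v := by ext j; simp [mul_add]
  map_smul' c u := by ext j; simp [Complex.real_smul, mul_left_comm]

theorem imPhasedAnalysis_apply_self (a : Fin N → EuclideanSpace ℂ (Fin n))
    (x₀ : EuclideanSpace ℂ (Fin n)) : imPhasedAnalysis a x₀ x₀ = 0 := by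
  ext j
  exact im_conj_phase_mul_self _

theorem norm_imPhasedAnalysis (a : Fin N → EuclideanSpace ℂ (Fin n))
    (x₀ u : EuclideanSpace ℂ (Fin n)) :
    ‖imPhasedAnalysis a x₀ u‖ = Real.sqrt (∑ j,
      (((starRingEnd ℂ) (phase (inner ℂ (a j) x₀ : ℂ)) * (inner ℂ (a j) u : ℂ)).im) ^ 2) := by
  simp [EuclideanSpace.norm_eq, imPhasedAnalysis]

theorem real_constraint_removal_general {n N : ℕ}
    (a : Fin N → EuclideanSpace ℂ (Fin n))
    (x0 : EuclideanSpace ℂ (Fin n)) (hreal : ∀ i, (x0 i).im = 0)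
    (ImB : EuclideanSpace ℂ (Fin n) → ℝ)
    (hImB : ∀ u, ImB u = Real.sqrt (∑ j,
      (((starRingEnd ℂ) (phase (inner ℂ (a j) x0 : ℂ)) * (inner ℂ (a j) u : ℂ)).im) ^ 2)) :
    sSup {r : ℝ | ∃ u : EuclideanSpace ℂ (Fin n), (∀ i, (u i).im = 0) ∧
        (inner ℂ u x0 : ℂ).re = 0 ∧ ‖u‖ = 1 ∧ r = ImB u}
      = sSup {r : ℝ | ∃ u : EuclideanSpace ℂ (Fin n), (∀ i, (u i).im = 0) ∧
        ‖u‖ = 1 ∧ r = ImB u} := by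
  set L := imPhasedAnalysis a x0
  have hImB_eq : ∀ u, ImB u = ‖L u‖ := fun u => (hImB u).trans (norm_imPhasedAnalysis a x0 u).symm
  apply sSup_eq_of_subset_of_forall_pos_exists_ge
  · rintro r ⟨u, hu, -, hu₁, rfl⟩
    exact ⟨u, hu, hu₁, rfl⟩
  · refine ⟨‖LinearMap.toContinuousLinearMap L‖, ?_⟩
    rintro r ⟨u, -, hu₁, rfl⟩
    simpa [hImB_eq, hu₁] using (LinearMap.toContinuousLinearMap L).le_opNorm u
  · rintro r ⟨u, -, -, rfl⟩
    exact (hImB_eq u).symm ▸ norm_nonneg _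
  · rintro r ⟨u, hu, hu₁, rfl⟩ hpos
    rw [hImB_eq] at hpos ⊢
    obtain ⟨v, hv, hv_orth, hv₁, hle⟩ := exists_orthogonal_unit_norm_apply_ge (realVectors n)
      (u := u) hreal L (imPhasedAnalysis_apply_self a x0) hu hu₁ (norm_pos_iff.mp hpos)
    exact ⟨_, ⟨v, hv, (EuclideanSpace.real_inner_eq_re_inner v x0).symm.trans hv_orth,
      hv₁, (hImB_eq v).symm⟩, hle⟩

/-- for `n ≥ 2`, isometric `A^*` (Parseval frame condition on the columns
`a j` of `A`) and a nonzero real vector `x0`, the orthogonality constraint `⟨u, x0⟩ = 0`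
can be removed in the definition of the second singular value over real vectors:
`sup{‖Im(B^* u)‖ : u real, ⟨u,x0⟩ = 0, ‖u‖=1} = sup{‖Im(B^* u)‖ : u real, ‖u‖=1}`,
where `(B^* u) j = conj(phase(a_j^* x0))·(a_j^* u)`. -/
theorem real_constraint_removal {n N : ℕ} (hn : 2 ≤ n)
    (a : Fin N → EuclideanSpace ℂ (Fin n))
    (hiso : ∀ x : EuclideanSpace ℂ (Fin n), ∑ j, (inner ℂ (a j) x : ℂ) • a j = x)
    (x0 : EuclideanSpace ℂ (Fin n)) (hx0 : x0 ≠ 0) (hreal : ∀ i, (x0 i).im = 0)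
    (ImB : EuclideanSpace ℂ (Fin n) → ℝ)
    (hImB : ∀ u, ImB u = Real.sqrt (∑ j,
      (((starRingEnd ℂ) (phase (inner ℂ (a j) x0 : ℂ)) * (inner ℂ (a j) u : ℂ)).im) ^ 2)) :
    sSup {r : ℝ | ∃ u : EuclideanSpace ℂ (Fin n), (∀ i, (u i).im = 0) ∧
        (inner ℂ u x0 : ℂ).re = 0 ∧ ‖u‖ = 1 ∧ r = ImB u}
      = sSup {r : ℝ | ∃ u : EuclideanSpace ℂ (Fin n), (∀ i, (u i).im = 0) ∧
        ‖u‖ = 1 ∧ r = ImB u} :=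
  real_constraint_removal_general a x0 hreal ImB hImB
end
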